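/- Let M be an s×n integer matrix (n ≥ s ≥ 1) whose columns span ℝˢ. Then every infinitely differentiable complex-valued function f on ℝˢ satisfying D_Y f = 0 for all Y ∈ 𝒴(M) is a polynomial of total degree at most n − s; that is, D(M) ⊆ 𝒫_{n−s}(ℝˢ). -/

import Mathlib

/-- The `j`-th column of `M`, as a vector of `ℝˢ`. -/
def col (s n : ℕ) (M : Matrix (Fin s) (Fin n) ℤ) (j : Fin n) : Fin s → ℝ :=
  fun i => (M i j : ℝ)

/-- The iterated directional-derivative operator `D_Y = ∏_{y ∈ Y} D_y`, applied along a
list of direction vectors (`D_y f = ∑_j y_j ∂_j f`). -/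
noncomputable def DY {F : Type*} [NormedAddCommGroup F] [NormedSpace ℝ F]
    (s : ℕ) (l : List (Fin s → ℝ)) (f : (Fin s → ℝ) → F) : (Fin s → ℝ) → F :=
  l.foldr (fun y g => fun x => fderiv ℝ g x y) f

theorem DY_nil {F : Type*} [NormedAddCommGroup F] [NormedSpace ℝ F] {s : ℕ}
    (f : (Fin s → ℝ) → F) : DY s [] f = f := rfl

theorem DY_cons {F : Type*} [NormedAddCommGroup F] [NormedSpace ℝ F] {s : ℕ}
    (y : Fin s → ℝ) (l : List (Fin s → ℝ)) (f : (Fin s → ℝ) → F) :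
    DY s (y :: l) f = fun x => fderiv ℝ (DY s l f) x y := rfl

theorem DY_append {F : Type*} [NormedAddCommGroup F] [NormedSpace ℝ F] {s : ℕ}
    (l₁ l₂ : List (Fin s → ℝ)) (f : (Fin s → ℝ) → F) :
    DY s (l₁ ++ l₂) f = DY s l₁ (DY s l₂ f) := by
  simp [DY, List.foldr_append]

theorem contDiff_D1 {F : Type*} [NormedAddCommGroup F] [NormedSpace ℝ F] {s : ℕ}
    {f : (Fin s → ℝ) → F} (hf : ContDiff ℝ (⊤ : ℕ∞) f) (y : Fin s → ℝ) :
    ContDiff ℝ (⊤ : ℕ∞) (fun x => fderiv ℝ f x y) := by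
  have h1 : ContDiff ℝ (⊤ : ℕ∞) (fderiv ℝ f) := hf.fderiv_right (by simp)
  exact (ContinuousLinearMap.apply ℝ F y).contDiff.comp h1

theorem contDiff_DY {F : Type*} [NormedAddCommGroup F] [NormedSpace ℝ F] {s : ℕ}
    {f : (Fin s → ℝ) → F} (hf : ContDiff ℝ (⊤ : ℕ∞) f) (l : List (Fin s → ℝ)) :
    ContDiff ℝ (⊤ : ℕ∞) (DY s l f) := by
  induction l with
  | nil => exact hf
  | cons y l ih => exact contDiff_D1 ih y

theorem D1_apply_eq {F : Type*} [NormedAddCommGroup F] [NormedSpace ℝ F] {s : ℕ}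
    {g : (Fin s → ℝ) → F} (hg : ContDiff ℝ (⊤ : ℕ∞) g) (z a b : Fin s → ℝ) :
    fderiv ℝ (fun w => fderiv ℝ g w b) z a = fderiv ℝ (fderiv ℝ g) z a b := by
  have h1 : ContDiff ℝ (⊤ : ℕ∞) (fderiv ℝ g) := hg.fderiv_right (by simp)
  have h2 : HasFDerivAt (fun w => (ContinuousLinearMap.apply ℝ F b) (fderiv ℝ g w))
      ((ContinuousLinearMap.apply ℝ F b).comp (fderiv ℝ (fderiv ℝ g) z)) z :=
    (ContinuousLinearMap.apply ℝ F b).hasFDerivAt.comp z (h1.differentiable (by simp) z).hasFDerivAt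
  have := h2.fderiv
  simp only [ContinuousLinearMap.apply_apply] at this
  rw [this]; rfl

theorem D1_swap {F : Type*} [NormedAddCommGroup F] [NormedSpace ℝ F] {s : ℕ}
    {g : (Fin s → ℝ) → F} (hg : ContDiff ℝ (⊤ : ℕ∞) g) (a b : Fin s → ℝ) :
    (fun z => fderiv ℝ (fun w => fderiv ℝ g w b) z a)
      = fun z => fderiv ℝ (fun w => fderiv ℝ g w a) z b := by
  funext z
  rw [D1_apply_eq hg z a b, D1_apply_eq hg z b a]
  exact second_derivative_symmetric (f := g) (fun y => (hg.differentiable (by simp) y).hasFDerivAt)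
    (((hg.fderiv_right (m := (⊤ : ℕ∞)) (by simp)).differentiable (by simp) z).hasFDerivAt) a b

theorem DY_perm {F : Type*} [NormedAddCommGroup F] [NormedSpace ℝ F] {s : ℕ}
    {f : (Fin s → ℝ) → F} (hf : ContDiff ℝ (⊤ : ℕ∞) f) {l l' : List (Fin s → ℝ)}
    (hp : l.Perm l') : DY s l f = DY s l' f := by
  induction hp with
  | nil => rfl
  | cons y _ ih =>
      simp only [DY, List.foldr_cons] at ih ⊢
      rw [ih]
  | swap a b l =>
      show (fun x => fderiv ℝ (fun w => fderiv ℝ (DY s l f) w a) x b)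
        = fun x => fderiv ℝ (fun w => fderiv ℝ (DY s l f) w b) x a
      exact D1_swap (contDiff_DY hf l) b a
  | trans _ _ ih1 ih2 => rw [ih1, ih2]

theorem DY_zero {F : Type*} [NormedAddCommGroup F] [NormedSpace ℝ F] {s : ℕ}
    (l : List (Fin s → ℝ)) : DY s l (fun _ => (0 : F)) = fun _ => 0 := by
  induction l with
  | nil => rfl
  | cons y l ih =>
      show (fun x => fderiv ℝ (DY s l fun _ => (0:F)) x y) = _
      rw [ih]; funext x; rw [fderiv_const_apply]; rfl

theorem DY_sum_smul {F : Type*} [NormedAddCommGroup F] [NormedSpace ℝ F] {s : ℕ}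
    {ι : Type*} (S : Finset ι) (c : ι → ℝ) (g : ι → (Fin s → ℝ) → F)
    (hg : ∀ j, ContDiff ℝ (⊤ : ℕ∞) (g j)) (l : List (Fin s → ℝ)) :
    DY s l (fun z => ∑ j ∈ S, c j • g j z) = fun z => ∑ j ∈ S, c j • DY s l (g j) z := by
  induction l with
  | nil => rfl
  | cons y l ih =>
      show (fun x => fderiv ℝ (DY s l fun z => ∑ j ∈ S, c j • g j z) x y) = _
      rw [ih]; funext x
      have hdiff : ∀ j ∈ S, DifferentiableAt ℝ (fun z => c j • DY s l (g j) z) x :=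
        fun j _ => (((contDiff_DY (hg j) l).differentiable (by simp)).const_smul (c j)) x
      rw [fderiv_fun_sum hdiff]
      rw [ContinuousLinearMap.sum_apply]
      congr 1; funext j
      rw [fderiv_fun_const_smul (((contDiff_DY (hg j) l).differentiable (by simp)) x) (c j)]
      rfl

theorem core (s : ℕ) : ∀ (n : ℕ) (v : Fin n → (Fin s → ℝ)),
    Submodule.span ℝ (Set.range v) = ⊤ →
    ∀ f : (Fin s → ℝ) → ℂ, ContDiff ℝ (⊤ : ℕ∞) f →
    (∀ Y : Finset (Fin n), Submodule.span ℝ (v '' ↑Yᶜ) ≠ ⊤ →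
      DY s (Y.toList.map v) f = 0) →
    ∀ l : List (Fin s → ℝ), l.length = n - s + 1 → DY s l f = 0 := by
  intro n
  induction n using Nat.strong_induction_on with
  | _ n IH =>
  intro v hspan f hf hD l hl
  rcases l.eq_nil_or_concat with rfl | ⟨l₀, y, rfl⟩
  · simp at hl
  rw [List.concat_eq_append, DY_append]
  -- decompose y over the columns
  have hy : y ∈ Submodule.span ℝ (Set.range v) := hspan ▸ Submodule.mem_top
  obtain ⟨c, hc⟩ := Submodule.mem_span_range_iff_exists_fun ℝ |>.1 hy
  have hrw : DY s [y] f = fun z => ∑ j, c j • (fun w => fderiv ℝ f w (v j)) z := by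
    funext z
    show fderiv ℝ f z y = _
    rw [← hc, map_sum]
    simp [map_smul]
  rw [hrw, DY_sum_smul Finset.univ c _ (fun j => contDiff_D1 hf (v j)) l₀]
  funext z
  rw [Pi.zero_apply]
  refine Finset.sum_eq_zero fun j _ => ?_
  suffices h : DY s l₀ (fun w => fderiv ℝ f w (v j)) = 0 by rw [h]; simp
  have hl₀ : l₀.length = n - s := by
    rw [List.length_concat] at hl; omega
  by_cases hsj : Submodule.span ℝ (v '' ↑(({j} : Finset (Fin n))ᶜ)) = ⊤
  · -- remove column j, apply induction hypothesis
    have hn : n ≠ 0 := fun h => (h ▸ j).elim0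
    obtain ⟨m, rfl⟩ : ∃ m, n = m + 1 := ⟨n - 1, by omega⟩
    set v' : Fin m → (Fin s → ℝ) := v ∘ j.succAbove with hv'
    have hrange : Set.range v' = v '' ↑(({j} : Finset (Fin (m+1)))ᶜ) := by
      rw [hv', Set.range_comp, Fin.range_succAbove]
      simp
    have hspan' : Submodule.span ℝ (Set.range v') = ⊤ := by rw [hrange]; exact hsj
    have hm : s ≤ m := by
      have h1 : Module.finrank ℝ (Fin s → ℝ) = s := by
        simp [Module.finrank_fintype_fun_eq_card]
      have h2 := finrank_span_le_card (R := ℝ) (Set.range v')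
      rw [hspan', finrank_top, h1] at h2
      calc s ≤ (Set.range v').toFinset.card := h2
        _ ≤ m := by
          rw [Set.toFinset_range]
          exact (Finset.card_image_le).trans (by simp)
    set g : (Fin s → ℝ) → ℂ := fun w => fderiv ℝ f w (v j) with hg
    have hgsmooth : ContDiff ℝ (⊤ : ℕ∞) g := contDiff_D1 hf (v j)
    have hD' : ∀ Y' : Finset (Fin m), Submodule.span ℝ (v' '' ↑Y'ᶜ) ≠ ⊤ →
        DY s (Y'.toList.map v') g = 0 := by
      intro Y' hY'
      have hjmem : j ∉ Y'.map j.succAboveEmb := by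
        simp only [Finset.mem_map]
        rintro ⟨i, -, hi⟩
        exact Fin.succAbove_ne j i hi
      set Y : Finset (Fin (m+1)) := insert j (Y'.map j.succAboveEmb) with hY
      have hset : v '' ↑Yᶜ = v' '' ↑Y'ᶜ := by
        have hYc : (↑Yᶜ : Set (Fin (m+1))) = j.succAbove '' ↑Y'ᶜ := by
          ext x
          simp only [hY, Finset.coe_compl, Finset.coe_insert, Set.mem_compl_iff,
            Set.mem_insert_iff, Finset.mem_coe, Finset.mem_map, Fin.succAboveEmb_apply,
            Set.mem_image, not_or, not_exists, not_and]
          constructor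
          · rintro ⟨hxj, hx⟩
            obtain ⟨i, rfl⟩ := Fin.exists_succAbove_eq (Ne.symm (fun h => hxj h.symm))
            exact ⟨i, fun hi => (hx i hi) rfl, rfl⟩
          · rintro ⟨i, hi, rfl⟩
            exact ⟨fun h => Fin.succAbove_ne j i h, fun i' hi' h =>
              hi (Fin.succAbove_right_injective h ▸ hi')⟩
        rw [hYc, Set.image_image]
        rfl
      have h0 := hD Y (by rw [hset]; exact hY')
      have hperm : (Y.toList.map v).Perm (Y'.toList.map v' ++ [v j]) := by
        refine List.Perm.trans ?_ (List.perm_append_singleton _ _).symm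
        rw [← Multiset.coe_eq_coe, ← Multiset.map_coe, ← Multiset.cons_coe, ← Multiset.map_coe,
          Finset.coe_toList, Finset.coe_toList, hY, Finset.insert_val_of_notMem hjmem,
          Finset.map_val, Multiset.map_cons, Multiset.map_map]
        rfl
      have := DY_perm hf hperm
      rw [this] at h0
      rw [DY_append] at h0
      exact h0
    have hlen : l₀.length = m - s + 1 := by omega
    exact IH m (by omega) v' hspan' g hgsmooth hD' l₀ hlen
  · -- D_{v j} f = 0 directly
    have h0 := hD {j} (by simpa using hsj)
    have : ({j} : Finset (Fin n)).toList.map v = [v j] := by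
      rw [Finset.toList_singleton]; rfl
    rw [this] at h0
    have : (fun w => fderiv ℝ f w (v j)) = (fun _ => (0:ℂ)) := by
      funext w; exact congrFun h0 w
    rw [this, DY_zero]; rfl

/-- standard basis vector -/
def eb (s : ℕ) (i : Fin s) : Fin s → ℝ := Pi.single i 1

theorem DY_replicate_expand {s : ℕ} {f : (Fin s → ℝ) → ℂ} (hf : ContDiff ℝ (⊤ : ℕ∞) f)
    (j : ℕ) (x : Fin s → ℝ) :
    DY s (List.replicate j x) f
      = fun z => ∑ α : Fin j → Fin s,
          (∏ i, x (α i)) • DY s ((List.ofFn α).map (eb s)) f z := by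
  induction j with
  | zero =>
      funext z
      rw [Finset.sum_eq_single (ι := Fin 0 → Fin s) (Fin.elim0)]
      · simp [DY]
      · intro b _ hb; exact absurd (Subsingleton.elim b Fin.elim0) hb
      · intro h; exact absurd (Finset.mem_univ _) h
  | succ j ih =>
      have hstep : DY s (List.replicate (j+1) x) f
          = fun z => fderiv ℝ (DY s (List.replicate j x) f) z x := rfl
      rw [hstep, ih]
      funext z
      have hdiff : ∀ α : Fin j → Fin s, DifferentiableAt ℝ
          (DY s ((List.ofFn α).map (eb s)) f) z :=
        fun α => (contDiff_DY hf _).differentiable (by simp) z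
      rw [fderiv_fun_sum (fun α _ => (hdiff α).fun_const_smul _)]
      rw [ContinuousLinearMap.sum_apply]
      -- expand x in the basis inside each term
      have hx : x = ∑ i, x i • eb s i := by
        funext k
        rw [Finset.sum_apply]
        simp only [eb, Pi.smul_apply, Pi.single_apply, smul_eq_mul, mul_ite, mul_one, mul_zero]
        simp [Finset.sum_ite_eq']
      calc (∑ α : Fin j → Fin s,
              fderiv ℝ (fun z => (∏ i, x (α i)) • DY s ((List.ofFn α).map (eb s)) f z) z x)
          = ∑ α : Fin j → Fin s, ∑ i, (x i * ∏ k, x (α k)) •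
              DY s ((List.ofFn (Fin.cons i α : Fin (j+1) → Fin s)).map (eb s)) f z := by
            refine Finset.sum_congr rfl fun α _ => ?_
            rw [fderiv_fun_const_smul (hdiff α)]
            rw [ContinuousLinearMap.smul_apply]
            have hexp : fderiv ℝ (DY s ((List.ofFn α).map (eb s)) f) z x
                = ∑ i, x i • fderiv ℝ (DY s ((List.ofFn α).map (eb s)) f) z (eb s i) := by
              conv_lhs => rw [hx]
              rw [map_sum]
              exact Finset.sum_congr rfl fun i _ => map_smul _ _ _
            rw [hexp, Finset.smul_sum]
            refine Finset.sum_congr rfl fun i _ => ?_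
            have hlist : (List.ofFn (Fin.cons i α : Fin (j+1) → Fin s)).map (eb s)
                = eb s i :: (List.ofFn α).map (eb s) := by
              rw [List.ofFn_succ]
              simp [Fin.cons_zero, Fin.cons_succ]
            rw [hlist]
            have : DY s (eb s i :: (List.ofFn α).map (eb s)) f z
                = fderiv ℝ (DY s ((List.ofFn α).map (eb s)) f) z (eb s i) := rfl
            rw [this, smul_smul, mul_comm]
        _ = ∑ β : Fin (j+1) → Fin s, (∏ i, x (β i)) • DY s ((List.ofFn β).map (eb s)) f z := by
            rw [Finset.sum_comm]
            have hre : (∑ β : Fin (j+1) → Fin s,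
                  (∏ i, x (β i)) • DY s ((List.ofFn β).map (eb s)) f z)
                = ∑ i : Fin s, ∑ α : Fin j → Fin s,
                  (∏ k, x ((Fin.cons i α : Fin (j+1) → Fin s) k)) •
                    DY s ((List.ofFn (Fin.cons i α : Fin (j+1) → Fin s)).map (eb s)) f z := by
              rw [← Equiv.sum_comp (Fin.consEquiv (fun _ : Fin (j+1) => Fin s))
                (fun β => (∏ i, x (β i)) • DY s ((List.ofFn β).map (eb s)) f z)]
              exact Fintype.sum_prod_type _
            rw [hre]
            refine Finset.sum_congr rfl fun i _ => Finset.sum_congr rfl fun α _ => ?_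
            rw [Fin.prod_univ_succ]
            simp [Fin.cons_zero, Fin.cons_succ]

theorem ray_taylor {s : ℕ} {f : (Fin s → ℝ) → ℂ} (hf : ContDiff ℝ (⊤ : ℕ∞) f) (m : ℕ)
    (x : Fin s → ℝ) (hzero : DY s (List.replicate (m+1) x) f = 0) :
    f x = ∑ k ∈ Finset.range (m+1),
      ((Nat.factorial k : ℝ))⁻¹ • DY s (List.replicate k x) f 0 := by
  set F : ℕ → ℝ → ℂ := fun k t => DY s (List.replicate k x) f (t • x) with hFdef
  have hF : ∀ (k : ℕ) (t : ℝ), HasDerivAt (F k) (F (k+1) t) t := by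
    intro k t
    have hsm : HasDerivAt (fun t : ℝ => t • x) x t := by
      simpa using (hasDerivAt_id t).smul_const x
    have hG := ((contDiff_DY hf (List.replicate k x)).differentiable (by simp) (t • x)).hasFDerivAt
    exact hG.comp_hasDerivAt t hsm
  set w : ℕ → ℝ → ℂ := fun k t =>
    if k = 0 then 0 else ((1-t)^(k-1) / (Nat.factorial (k-1) : ℝ)) • F k t with hwdef
  have hu : ∀ (k : ℕ) (t : ℝ), HasDerivAt
      (fun t : ℝ => ((1-t)^k / (Nat.factorial k : ℝ)) • F k t) (w (k+1) t - w k t) t := by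
    intro k t
    have h1 : HasDerivAt (fun t : ℝ => 1 - t) (-1) t := (hasDerivAt_id t).const_sub 1
    have h2 := h1.fun_pow k
    have h3 := h2.div_const (Nat.factorial k : ℝ)
    have h4 := h3.fun_smul (hF k t)
    refine h4.congr_deriv (Eq.symm ?_)
    cases k with
    | zero => simp [hwdef]
    | succ k =>
        have hfac : (Nat.factorial (k+1) : ℝ) = (k+1) * (Nat.factorial k : ℝ) := by
          exact_mod_cast Nat.factorial_succ k
        have hk : (Nat.factorial k : ℝ) ≠ 0 := by positivity
        simp only [hwdef, Nat.succ_ne_zero, if_false, Nat.add_sub_cancel]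
        have hsc : ((k+1 : ℕ) : ℝ) * (1 - t) ^ k * -1 / ((Nat.factorial (k+1) : ℕ) : ℝ)
            = -((1-t)^k / (Nat.factorial k : ℝ)) := by
          rw [hfac]
          push_cast
          field_simp
        rw [hsc, neg_smul, ← sub_eq_add_neg]
  set H : ℝ → ℂ := fun t =>
    ∑ k ∈ Finset.range (m+1), ((1-t)^k / (Nat.factorial k : ℝ)) • F k t with hHdef
  have hH : ∀ t : ℝ, HasDerivAt H 0 t := by
    intro t
    have hsum := HasDerivAt.fun_sum (fun k (_ : k ∈ Finset.range (m+1)) => hu k t)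
    rw [Finset.sum_range_sub (fun k => w k t)] at hsum
    have hw0 : w 0 t = 0 := by simp [hwdef]
    have hwm : w (m+1) t = 0 := by
      simp only [hwdef, Nat.succ_ne_zero, if_false]
      have hFm : F (m+1) t = 0 := by
        have := congrFun hzero (t • x); simpa [hFdef] using this
      rw [hFm, smul_zero]
    rw [hw0, hwm, sub_zero] at hsum
    exact hsum
  have hconst : H 1 = H 0 :=
    is_const_of_deriv_eq_zero (fun t => (hH t).differentiableAt) (fun t => (hH t).deriv) 1 0
  have hH1 : H 1 = f x := by
    simp only [hHdef]
    rw [Finset.sum_eq_single 0]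
    · simp [hFdef, DY]
    · intro k _ hk
      simp [sub_self, zero_pow hk]
    · intro h; exact absurd (Finset.mem_range.mpr (Nat.succ_pos m)) h
  have hH0 : H 0 = ∑ k ∈ Finset.range (m+1),
      ((Nat.factorial k : ℝ))⁻¹ • DY s (List.replicate k x) f 0 := by
    simp only [hHdef]
    refine Finset.sum_congr rfl fun k _ => ?_
    simp [hFdef, one_div]
  rw [← hH1, hconst, hH0]

/-- `D(M) ⊆ 𝒫_{n-s}(ℝˢ)`: every infinitely differentiable `f : ℝˢ → ℂ` with
`D_Y f = 0` for all `Y ∈ 𝒴(M)` is a polynomial of total degree at most `n - s`. -/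
theorem D_M_subset_polynomials (s n : ℕ) (hs : 1 ≤ s) (hn : s ≤ n)
    (M : Matrix (Fin s) (Fin n) ℤ)
    (hspan : Submodule.span ℝ (Set.range (col s n M)) = ⊤) :
    ∀ f : (Fin s → ℝ) → ℂ, ContDiff ℝ (⊤ : ℕ∞) f →
      (∀ Y : Finset (Fin n),
        Submodule.span ℝ (col s n M '' ↑Yᶜ) ≠ ⊤ →
        DY s (Y.toList.map (col s n M)) f = 0) →
      ∃ p : MvPolynomial (Fin s) ℂ, p.totalDegree ≤ n - s ∧
        ∀ x : Fin s → ℝ, f x = MvPolynomial.eval (fun i => (x i : ℂ)) p := by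
  intro f hf hD
  set m := n - s with hm
  have hzero : ∀ x : Fin s → ℝ, DY s (List.replicate (m+1) x) f = 0 := fun x =>
    core s n (col s n M) hspan f hf hD _ (by simp [hm])
  set T : ∀ k : ℕ, (Fin k → Fin s) → ℂ :=
    fun k α => DY s ((List.ofFn α).map (eb s)) f 0 with hT
  refine ⟨∑ k ∈ Finset.range (m+1), ∑ α : Fin k → Fin s,
      MvPolynomial.C (((Nat.factorial k : ℝ) : ℂ)⁻¹ * T k α) * ∏ i, MvPolynomial.X (α i),
      ?_, ?_⟩
  · refine (MvPolynomial.totalDegree_finset_sum _ _).trans (Finset.sup_le fun k hk => ?_)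
    refine (MvPolynomial.totalDegree_finset_sum _ _).trans (Finset.sup_le fun α _ => ?_)
    refine (MvPolynomial.totalDegree_mul _ _).trans ?_
    have h1 : (MvPolynomial.C (σ := Fin s) (((Nat.factorial k : ℝ) : ℂ)⁻¹ * T k α)).totalDegree
        = 0 := MvPolynomial.totalDegree_C _
    have h2 : (∏ i, (MvPolynomial.X (α i) : MvPolynomial (Fin s) ℂ)).totalDegree ≤ k := by
      refine (MvPolynomial.totalDegree_finset_prod _ _).trans ?_
      simp [MvPolynomial.totalDegree_X]
    rw [h1, zero_add]
    exact h2.trans (by simpa using Nat.lt_succ_iff.mp (Finset.mem_range.mp hk))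
  · intro x
    rw [ray_taylor hf m x (hzero x)]
    simp only [map_sum, MvPolynomial.eval_mul, MvPolynomial.eval_C, MvPolynomial.eval_prod,
      MvPolynomial.eval_X]
    refine Finset.sum_congr rfl fun k _ => ?_
    rw [congrFun (DY_replicate_expand hf k x) 0, Finset.smul_sum]
    refine Finset.sum_congr rfl fun α _ => ?_
    rw [smul_smul, Complex.real_smul]
    push_cast
    ring
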